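/- For every non-negative integer n and real k with 0 < k < 1: ₂F₁(-n, 1/2; 1; 1/(1-k²)) = i^n (k²/(1-k²))^{n/2} P_n(-i(1-2k²)/(2k√(1-k²))). -/

import Mathlib

open Finset Complex

noncomputable def poch (a : ℝ) (k : ℕ) : ℝ := ∏ i ∈ Finset.range k, (a + i)

/-- Terminating hypergeometric polynomial ₂F₁(-n, 1/2; 1; x). -/
noncomputable def termF (n : ℕ) (x : ℝ) : ℝ :=
  ∑ i ∈ Finset.range (n + 1),
    poch (-(n : ℝ)) i * poch (1 / 2) i / ((Nat.factorial i) * (Nat.factorial i)) * x ^ i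

/-- Legendre polynomial of degree `n`, as a function on `ℂ`. -/
noncomputable def legendreP (n : ℕ) (z : ℂ) : ℂ :=
  (2 : ℂ) ^ (-(n : ℤ)) * ∑ k ∈ Finset.range (n / 2 + 1),
    (-1 : ℂ) ^ k * (n.choose k) * ((2 * n - 2 * k).choose n) * z ^ (n - 2 * k)

/-!
Put `u = 1 - k²`, `t = 2u - 1 = 1 - 2k²` and `w = 2k√u`, so that `w² = 1 - t²`.
Multiplied by `(4u)ⁿ`, the left side becomes `∑ᵢ (-1)ⁱ C(n,i) C(2i,i) (4u)ⁿ⁻ⁱ`, and the right side,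
through the explicit formula for `Pₙ` homogenised at `-i t / w = t / (i w)`, becomes
`∑ⱼ C(n,j) C(2n-2j,n) tⁿ⁻²ʲ (1 - t²)ʲ` (the powers of `i` cancel). Both sequences satisfy Bonnet's
recurrence `(n+2) Fₙ₊₂ = 2(2n+3) t Fₙ₊₁ + 4(n+1)(1 - t²) Fₙ`, which coefficientwise comes down to
Pascal's rule, `(j+1) C(r,j+1) = (r-j) C(r,j)` and `(r+1) C(2r+2,r+1) = 2(2r+1) C(2r,r)`; and they
agree for `n = 0, 1`.
-/

open scoped Nat

section Binomial

variable {R : Type*} [CommRing R]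

theorem natCast_choose_succ_right_mul (n k : ℕ) :
    (n.choose (k + 1) : R) * (k + 1) = n.choose k * (n - k) := by
  rcases le_or_gt k n with h | h
  · rw [← Nat.cast_sub h]
    exact_mod_cast congrArg (Nat.cast : ℕ → R) (Nat.choose_succ_right_eq n k)
  · simp [Nat.choose_eq_zero_of_lt h, Nat.choose_eq_zero_of_lt (Nat.lt_succ_of_lt h)]

theorem natCast_choose_mul_succ (n k : ℕ) :
    (n.choose k : R) * (n + 1) = (n + 1).choose k * (n + 1 - k) := by
  rcases le_or_gt k (n + 1) with h | h
  · have := congrArg (Nat.cast : ℕ → R) (Nat.choose_mul_succ_eq n k)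
    push_cast [h] at this
    exact this
  · simp [Nat.choose_eq_zero_of_lt h, Nat.choose_eq_zero_of_lt (Nat.lt_of_succ_lt h)]

end Binomial

def hyperCoeff (n i : ℕ) : ℤ := (-1) ^ i * n.choose i * i.centralBinom

theorem hyperCoeff_recurrence (n i : ℕ) :
    (n + 2) * hyperCoeff (n + 2) (i + 1) - (2 * n + 3) * hyperCoeff (n + 1) (i + 1)
      + (n + 1) * hyperCoeff n (i + 1)
      + 2 * (2 * n + 3) * hyperCoeff (n + 1) i - 4 * (n + 1) * hyperCoeff n i = 0 := by
  have pascal : ((n + 2).choose (i + 1) : ℤ) = (n + 1).choose i + (n + 1).choose (i + 1) := by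
    exact_mod_cast Nat.choose_succ_succ (n + 1) i
  have absorb₁ := natCast_choose_mul_succ (R := ℤ) n (i + 1)
  have absorb₀ := natCast_choose_mul_succ (R := ℤ) n i
  have shift := natCast_choose_succ_right_mul (R := ℤ) (n + 1) i
  have central : ((i : ℤ) + 1) * (i + 1).centralBinom = 2 * (2 * i + 1) * i.centralBinom := by
    exact_mod_cast Nat.succ_mul_centralBinom_succ i
  simp only [hyperCoeff]
  push_cast at absorb₁ absorb₀ shift ⊢
  linear_combination (-1) ^ (i + 1) * ((n + 2) * ((i + 1).centralBinom : ℤ) * pascal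
    + (i + 1).centralBinom * absorb₁ + 4 * i.centralBinom * absorb₀
    - (i + 1).centralBinom * shift + ((n + 1).choose i : ℤ) * central)

theorem hyperCoeff_eq_zero_of_lt {n i : ℕ} (h : n < i) : hyperCoeff n i = 0 := by
  simp [hyperCoeff, Nat.choose_eq_zero_of_lt h]

section HyperSum

variable {R : Type*} [CommRing R]

def hyperSum (n : ℕ) (q : R) : R := ∑ i ∈ range (n + 1), (hyperCoeff n i : R) * q ^ i

theorem hyperSum_eq_sum_range {n N : ℕ} (h : n < N) (q : R) :
    hyperSum n q = ∑ i ∈ range N, (hyperCoeff n i : R) * q ^ i := by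
  refine sum_subset (range_subset_range.mpr h) fun i _ hi ↦ ?_
  rw [hyperCoeff_eq_zero_of_lt (by simpa using hi), Int.cast_zero, zero_mul]

theorem hyperSum_recurrence (n : ℕ) (q : R) :
    (n + 2) * hyperSum (n + 2) q
      = (2 * n + 3) * (1 - 2 * q) * hyperSum (n + 1) q + (n + 1) * (4 * q - 1) * hyperSum n q := by
  set D : ℕ → R := fun i ↦ (n + 2) * hyperCoeff (n + 2) i - (2 * n + 3) * hyperCoeff (n + 1) i
    + (n + 1) * hyperCoeff n i
  set E : ℕ → R := fun i ↦
    2 * (2 * n + 3) * hyperCoeff (n + 1) i - 4 * (n + 1) * hyperCoeff n i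
  have hD0 : D 0 = 0 := by simp [D, hyperCoeff]; ring
  have hE : E (n + 2) = 0 := by
    simp [E, hyperCoeff_eq_zero_of_lt (show n + 1 < n + 2 by omega),
      hyperCoeff_eq_zero_of_lt (show n < n + 2 by omega)]
  have hDE : ∀ i, D (i + 1) + E i = 0 := fun i ↦ by
    have := congrArg (Int.cast : ℤ → R) (hyperCoeff_recurrence n i)
    push_cast at this
    linear_combination this
  have key : ∑ i ∈ range (n + 3), (D i * q ^ i + E i * q ^ (i + 1)) = 0 := by
    rw [sum_add_distrib, sum_range_succ', sum_range_succ _ (n + 2), hD0, hE, zero_mul, zero_mul,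
      add_zero, add_zero, ← sum_add_distrib]
    exact sum_eq_zero fun i _ ↦ by rw [← add_mul, hDE, zero_mul]
  rw [hyperSum_eq_sum_range (show n + 2 < n + 3 by omega),
    hyperSum_eq_sum_range (show n + 1 < n + 3 by omega),
    hyperSum_eq_sum_range (show n < n + 3 by omega), ← sub_eq_zero, ← key,
    mul_sum, mul_sum, mul_sum, ← sum_add_distrib, ← sum_sub_distrib]
  refine sum_congr rfl fun i _ ↦ ?_
  simp only [D, E]
  ring

end HyperSum

theorem poch_neg_natCast (n i : ℕ) : poch (-n) i = (-1) ^ i * i ! * n.choose i := by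
  have : ∏ j ∈ range i, (-(n : ℝ) + j) = ∏ j ∈ range i, -((n : ℝ) - j) :=
    prod_congr rfl fun j _ ↦ by ring
  rw [poch, this, prod_neg, card_range, ← descPochhammer_eval_eq_prod_range,
    descPochhammer_eval_eq_descFactorial, Nat.descFactorial_eq_factorial_mul_choose]
  push_cast
  ring

theorem poch_half_mul_four_pow (i : ℕ) : poch (1 / 2) i * 4 ^ i = i.centralBinom * i ! := by
  induction i with
  | zero => simp [poch]
  | succ i ih =>
    have central : ((i : ℝ) + 1) * (i + 1).centralBinom = 2 * (2 * i + 1) * i.centralBinom := by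
      exact_mod_cast Nat.succ_mul_centralBinom_succ i
    rw [poch, prod_range_succ, ← poch, Nat.factorial_succ]
    push_cast
    linear_combination 2 * (2 * (i : ℝ) + 1) * ih - (i ! : ℝ) * central

theorem termF_eq_hyperSum (n : ℕ) (x : ℝ) : termF n x = hyperSum n (x / 4) := by
  refine sum_congr rfl fun i _ ↦ ?_
  have hhalf : poch (1 / 2) i = i.centralBinom * i ! / 4 ^ i :=
    eq_div_of_mul_eq (by positivity) (poch_half_mul_four_pow i)
  rw [poch_neg_natCast, hhalf, hyperCoeff, div_pow]
  push_cast
  field_simp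

def legendreCoeff (n j : ℕ) : ℕ := n.choose j * (2 * n - 2 * j).choose n

theorem legendreCoeff_eq_zero_of_lt {n j : ℕ} (h : n < 2 * j) : legendreCoeff n j = 0 := by
  rcases lt_or_ge n j with hj | hj
  · rw [legendreCoeff, Nat.choose_eq_zero_of_lt hj, zero_mul]
  · rw [legendreCoeff, Nat.choose_eq_zero_of_lt (by omega : 2 * n - 2 * j < n), mul_zero]

theorem legendreCoeff_eq_centralBinom_mul_choose (n j : ℕ) :
    legendreCoeff n j = (n - j).centralBinom * (n - j).choose j := by
  rcases lt_or_ge n (2 * j) with h | h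
  · rw [legendreCoeff_eq_zero_of_lt h, Nat.choose_eq_zero_of_lt (by omega), mul_zero]
  obtain ⟨m, rfl⟩ : ∃ m, n = m + 2 * j := ⟨n - 2 * j, by omega⟩
  have := Nat.choose_mul (n := 2 * (m + j)) (k := m + 2 * j) (s := m + j) (by omega)
  rw [legendreCoeff, Nat.centralBinom_eq_two_mul_choose, show m + 2 * j - j = m + j by omega,
    ← Nat.choose_symm_of_eq_add (show m + 2 * j = (m + j) + j by omega),
    show 2 * (m + 2 * j) - 2 * j = 2 * (m + j) by omega, mul_comm, this,
    show 2 * (m + j) - (m + j) = m + j by omega, show m + 2 * j - (m + j) = j by omega]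

theorem legendreCoeff_zero_recurrence (n : ℕ) :
    (n + 2) * legendreCoeff (n + 2) 0 = 2 * (2 * n + 3) * legendreCoeff (n + 1) 0 := by
  simp only [legendreCoeff, Nat.choose_zero_right, one_mul, mul_zero, Nat.sub_zero,
    ← Nat.centralBinom_eq_two_mul_choose]
  linarith [Nat.succ_mul_centralBinom_succ (n + 1)]

theorem legendreCoeff_recurrence (n j : ℕ) :
    (n + 2) * legendreCoeff (n + 2) (j + 1)
      = 2 * (2 * n + 3) * legendreCoeff (n + 1) (j + 1) + 4 * (n + 1) * legendreCoeff n j := by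
  rcases lt_or_ge n (2 * j) with h | h
  · simp [legendreCoeff_eq_zero_of_lt, h, (by omega : n + 1 < 2 * (j + 1)),
      (by omega : n + 2 < 2 * (j + 1))]
  obtain ⟨r, rfl⟩ : ∃ r, n = r + j := ⟨n - j, by omega⟩
  rw [legendreCoeff_eq_centralBinom_mul_choose, legendreCoeff_eq_centralBinom_mul_choose,
    legendreCoeff_eq_centralBinom_mul_choose, show r + j + 2 - (j + 1) = r + 1 by omega,
    show r + j + 1 - (j + 1) = r by omega, Nat.add_sub_cancel]
  refine Nat.eq_of_mul_eq_mul_left r.succ_pos ?_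
  have central : ((r : ℤ) + 1) * (r + 1).centralBinom = 2 * (2 * r + 1) * r.centralBinom := by
    exact_mod_cast Nat.succ_mul_centralBinom_succ r
  have pascal : ((r + 1).choose (j + 1) : ℤ) = r.choose j + r.choose (j + 1) := by
    exact_mod_cast Nat.choose_succ_succ r j
  have shift := natCast_choose_succ_right_mul (R := ℤ) r j
  zify
  linear_combination (r + j + 2 : ℤ) * ((r + 1).choose (j + 1) : ℤ) * central
    + 2 * (2 * r + 1) * (r + j + 2 : ℤ) * r.centralBinom * pascal - 2 * r.centralBinom * shift

section LegendreForm

variable {R : Type*} [CommRing R]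

def legendreForm (n : ℕ) (t s : R) : R :=
  ∑ j ∈ range (n + 1), (legendreCoeff n j : R) * t ^ (n - 2 * j) * s ^ j

theorem mul_legendreForm (n : ℕ) (t s : R) :
    t * legendreForm n t s
      = ∑ j ∈ range (n + 1), (legendreCoeff n j : R) * t ^ (n + 1 - 2 * j) * s ^ j := by
  rw [legendreForm, mul_sum]
  refine sum_congr rfl fun j _ ↦ ?_
  rcases lt_or_ge n (2 * j) with h | h
  · simp [legendreCoeff_eq_zero_of_lt h]
  · rw [show n + 1 - 2 * j = n - 2 * j + 1 by omega, pow_succ]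
    ring

theorem legendreForm_recurrence (n : ℕ) (t s : R) :
    (n + 2) * legendreForm (n + 2) t s
      = 2 * (2 * n + 3) * t * legendreForm (n + 1) t s + 4 * (n + 1) * s * legendreForm n t s := by
  have head : ((n : R) + 2) * legendreCoeff (n + 2) 0
      = 2 * (2 * n + 3) * legendreCoeff (n + 1) 0 := by
    exact_mod_cast congrArg (Nat.cast : ℕ → R) (legendreCoeff_zero_recurrence n)
  have body : ∀ j, ((n : R) + 2) * legendreCoeff (n + 2) (j + 1)
      = 2 * (2 * n + 3) * legendreCoeff (n + 1) (j + 1) + 4 * (n + 1) * legendreCoeff n j :=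
    fun j ↦ by exact_mod_cast congrArg (Nat.cast : ℕ → R) (legendreCoeff_recurrence n j)
  have top : legendreCoeff (n + 2) (n + 2) = 0 := legendreCoeff_eq_zero_of_lt (by omega)
  have hexp : ∀ j, n + 1 + 1 - 2 * (j + 1) = n - 2 * j := fun j ↦ by omega
  rw [mul_assoc _ t, mul_legendreForm, legendreForm, legendreForm, sum_range_succ', sum_range_succ,
    top, sum_range_succ' _ (n + 1)]
  simp only [hexp, Nat.cast_zero, zero_mul, add_zero, mul_zero, Nat.sub_zero, pow_zero, mul_one]
  simp only [mul_add, mul_sum]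
  rw [← mul_assoc, head, add_right_comm, ← sum_add_distrib]
  congr 1
  · refine sum_congr rfl fun j _ ↦ ?_
    rw [← mul_assoc, ← mul_assoc, ← mul_assoc, body]
    ring
  · ring

theorem legendreForm_eq_sum_range_half (n : ℕ) (t s : R) :
    legendreForm n t s
      = ∑ j ∈ range (n / 2 + 1), (legendreCoeff n j : R) * t ^ (n - 2 * j) * s ^ j := by
  refine (sum_subset (range_subset_range.mpr (by omega)) fun j _ hj ↦ ?_).symm
  rw [legendreCoeff_eq_zero_of_lt (by simp at hj; omega), Nat.cast_zero, zero_mul, zero_mul]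

end LegendreForm

theorem hyperSum_eq_legendreForm {K : Type*} [Field K] [CharZero K] {u : K} (hu : u ≠ 0)
    (n : ℕ) :
    (4 * u) ^ n * hyperSum n (4 * u)⁻¹ = legendreForm n (2 * u - 1) (4 * u * (1 - u)) := by
  have hq : 4 * u * (4 * u)⁻¹ = 1 := mul_inv_cancel₀ (by simpa using hu)
  set q := (4 * u)⁻¹
  suffices ∀ n, (4 * u) ^ n * hyperSum n q = legendreForm n (2 * u - 1) (4 * u * (1 - u)) ∧
      (4 * u) ^ (n + 1) * hyperSum (n + 1) q
        = legendreForm (n + 1) (2 * u - 1) (4 * u * (1 - u)) from (this n).1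
  intro n
  induction n with
  | zero =>
    simp [hyperSum, legendreForm, hyperCoeff, legendreCoeff, Nat.centralBinom_eq_two_mul_choose,
      sum_range_succ, q]
    field_simp
    ring
  | succ n ih =>
    have hn : ((n + 2 : ℕ) : K) ≠ 0 := Nat.cast_ne_zero.mpr (n + 1).succ_ne_zero
    refine ⟨ih.2, mul_left_cancel₀ hn ?_⟩
    push_cast
    linear_combination (4 * u) ^ (n + 2) * hyperSum_recurrence n q
      - legendreForm_recurrence n (2 * u - 1) (4 * u * (1 - u))
      + (2 * n + 3) * (4 * u) * (1 - 2 * q) * ih.2 + (n + 1) * (4 * u) ^ 2 * (4 * q - 1) * ih.1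
      + (-2 * (2 * n + 3) * legendreForm (n + 1) (2 * u - 1) (4 * u * (1 - u))
        + 16 * u * (n + 1) * legendreForm n (2 * u - 1) (4 * u * (1 - u))) * hq

theorem termF_inv_eq_legendreForm {u : ℝ} (hu : u ≠ 0) (n : ℕ) :
    termF n u⁻¹ = legendreForm n (2 * u - 1) (4 * u * (1 - u)) / (4 * u) ^ n := by
  rw [termF_eq_hyperSum, inv_div_left, eq_div_iff (by positivity), mul_comm,
    hyperSum_eq_legendreForm hu]

theorem legendreP_div {x y : ℂ} (hy : y ≠ 0) (n : ℕ) :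
    legendreP n (x / y) = legendreForm n x (-y ^ 2) / (2 * y) ^ n := by
  rw [legendreP, legendreForm_eq_sum_range_half, sum_div, mul_sum]
  refine sum_congr rfl fun j hj ↦ ?_
  have hpow : y ^ n = y ^ (n - 2 * j) * (y ^ 2) ^ j := by
    rw [← pow_mul, ← pow_add, Nat.sub_add_cancel (by simp at hj; omega)]
  rw [zpow_neg, zpow_natCast, div_pow, mul_pow, hpow, neg_pow (y ^ 2), legendreCoeff]
  push_cast
  field_simp

theorem legendreP_neg_I_mul_div {w : ℝ} (hw : w ≠ 0) (x : ℝ) (n : ℕ) :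
    legendreP n (-Complex.I * x / w) = legendreForm n x (w ^ 2) / (2 * Complex.I * w) ^ n := by
  have hIw : Complex.I * w ≠ 0 := mul_ne_zero Complex.I_ne_zero (by exact_mod_cast hw)
  have hz : -Complex.I * x / w = x / (Complex.I * w) := by
    field_simp
    rw [Complex.I_sq]
    ring
  have hcast :
      ((legendreForm n x (w ^ 2) : ℝ) : ℂ) = legendreForm n (x : ℂ) ((w : ℂ) ^ 2) := by
    simp [legendreForm]
  rw [hz, legendreP_div hIw, ← mul_assoc, mul_pow, Complex.I_sq, neg_one_mul, neg_neg, hcast]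

theorem termF_eq_legendre (n : ℕ) (k : ℝ) (hk0 : 0 < k) (hk1 : k < 1) :
    (termF n (1 / (1 - k ^ 2)) : ℂ) =
      Complex.I ^ n * (((k ^ 2 / (1 - k ^ 2)) ^ ((n : ℝ) / 2) : ℝ) : ℂ) *
        legendreP n (-Complex.I * ((1 - 2 * k ^ 2 : ℝ) : ℂ) /
          ((2 * k * Real.sqrt (1 - k ^ 2) : ℝ) : ℂ)) := by
  have hu : 0 < 1 - k ^ 2 := by nlinarith
  set c := √(1 - k ^ 2)
  have hc : 0 < c := Real.sqrt_pos.mpr hu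
  have hc2 : c ^ 2 = 1 - k ^ 2 := Real.sq_sqrt hu.le
  have hrpow : (k ^ 2 / (1 - k ^ 2)) ^ ((n : ℝ) / 2) = (k / c) ^ n := by
    rw [Real.rpow_div_two_eq_sqrt _ (by positivity), Real.rpow_natCast, Real.sqrt_div' _ hu.le,
      Real.sqrt_sq hk0.le]
  rw [one_div, termF_inv_eq_legendreForm hu.ne', hrpow,
    legendreP_neg_I_mul_div (by positivity : 2 * k * c ≠ 0),
    show 2 * (1 - k ^ 2) - 1 = 1 - 2 * k ^ 2 by ring,
    show 4 * (1 - k ^ 2) * (1 - (1 - k ^ 2)) = (2 * k * c) ^ 2 by rw [mul_pow, hc2]; ring, ← hc2]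
  have hc' : (c : ℂ) ≠ 0 := by exact_mod_cast hc.ne'
  have hk' : (k : ℂ) ≠ 0 := by exact_mod_cast hk0.ne'
  push_cast
  rw [show 2 * Complex.I * (2 * k * c) = 4 * (Complex.I * k * c) by ring]
  simp only [div_pow, mul_pow]
  field_simp
  ring
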